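/- Let X, Y be independent nonnegative random variables with distributions F, G ∈ 𝒯 = ℒ ∩ 𝒫𝒟 such that the convolution satisfies (F*G)‾(x) ~ F̄(x) + Ḡ(x) as x→∞. Then F*G ∈ 𝒫𝒟, and moreover the maximum satisfies P[max(X,Y) > x] = F̄(x) + Ḡ(x) − F̄(x)Ḡ(x) ~ F̄(x) + Ḡ(x), so the distribution of max(X,Y) is also in 𝒫𝒟. -/

import Mathlib

open Filter MeasureTheory

/-- Tail of (the distribution of) a random variable `X`. -/
noncomputable def rtail {Ω : Type*} [MeasurableSpace Ω] (μ : Measure Ω) (X : Ω → ℝ) (x : ℝ) : ℝ :=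
  (μ {ω | x < X ω}).toReal

/-- The positively decreasing class `𝒫𝒟`. -/
def PosDec (T : ℝ → ℝ) : Prop :=
  ∀ v : ℝ, 1 < v → limsup (fun x => T (v * x) / T x) atTop < 1

/-- The generalized long-tailed class `𝒪ℒ`. -/
def GenLong (T : ℝ → ℝ) : Prop :=
  ∀ t : ℝ, t ≠ 0 → IsBoundedUnder (· ≤ ·) atTop (fun x => T (x - t) / T x)

/-- The long-tailed class `ℒ`. -/
def LongTailed (T : ℝ → ℝ) : Prop :=
  ∀ t : ℝ, Tendsto (fun x => T (x - t) / T x) atTop (nhds 1)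

/-- The dominatedly varying class `𝒟`. -/
def DomVar (T : ℝ → ℝ) : Prop :=
  ∀ b : ℝ, 0 < b → b < 1 → IsBoundedUnder (· ≤ ·) atTop (fun x => T (b * x) / T x)

/-- Strong asymptotic independence with constant `C`:
`P[X > x, Y > y] ~ C ⋅ F̄(x) ⋅ Ḡ(y)` as `(x, y) → (∞, ∞)`. -/
def SAI {Ω : Type*} [MeasurableSpace Ω] (μ : Measure Ω) (X Y : Ω → ℝ) (C : ℝ) : Prop :=
  Tendsto
    (fun p : ℝ × ℝ =>
      (μ {ω | p.1 < X ω ∧ p.2 < Y ω}).toReal / (rtail μ X p.1 * rtail μ Y p.2))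
    (atTop ×ˢ atTop) (nhds C)

/-!
Write `F̄, Ḡ` for the tails of `X, Y`. For a nonnegative nonincreasing tail, `𝒫𝒟` says that for
each `v > 1` there is `c < 1` with `T (v x) ≤ c T x` eventually. Such a bound passes to `F̄ + Ḡ`
with the larger of the two constants (the mediant inequality), and then to any tail asymptotically
equal to `F̄ + Ḡ`, at the cost of a factor `ρ²` with `ρ` as close to `1` as needed. This gives the
`𝒫𝒟` property of `X + Y` directly from the hypothesis, and of `max X Y` once its tail
`F̄ + Ḡ - F̄ Ḡ` is seen to be asymptotic to `F̄ + Ḡ`, which holds since `F̄ Ḡ / (F̄ + Ḡ) ≤ F̄ → 0`.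
-/

open Set Topology

/-- For nonnegative nonincreasing functions this is equivalent to `PosDec`, and unlike the limsup
it is visibly stable under sums and asymptotic equivalence. -/
def EventuallyContractive (T : ℝ → ℝ) : Prop :=
  ∀ v : ℝ, 1 < v → ∃ c ∈ Ico (0 : ℝ) 1, ∀ᶠ x in atTop, T (v * x) ≤ c * T x

section RealFunctions

variable {F G S T : ℝ → ℝ}

theorem PosDec.eventuallyContractive (hT0 : ∀ x, 0 ≤ T x) (hTa : Antitone T) (hT : PosDec T) :
    EventuallyContractive T := by
  intro v hv
  obtain ⟨c, hLc, hc1⟩ := exists_between (max_lt (hT v hv) one_pos)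
  have hle : ∀ x, 0 ≤ x → T (v * x) ≤ T x := fun x hx => hTa (le_mul_of_one_le_left hx hv.le)
  have hbdd : IsBoundedUnder (· ≤ ·) atTop (fun x => T (v * x) / T x) :=
    isBoundedUnder_of_eventually_le <| (eventually_ge_atTop 0).mono fun x hx =>
      div_le_one_of_le₀ (hle x hx) (hT0 x)
  refine ⟨c, ⟨(le_max_right _ _).trans hLc.le, hc1⟩, ?_⟩
  filter_upwards [eventually_lt_of_limsup_lt ((le_max_left _ _).trans_lt hLc) hbdd,
    eventually_ge_atTop 0] with x hx hx0
  rcases (hT0 x).eq_or_lt with hzero | hpos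
  · simpa [← hzero] using hle x hx0
  · exact ((div_lt_iff₀ hpos).1 hx).le

theorem EventuallyContractive.posDec (hT0 : ∀ x, 0 ≤ T x) (hT : EventuallyContractive T) :
    PosDec T := by
  intro v hv
  obtain ⟨c, ⟨hc0, hc1⟩, hc⟩ := hT v hv
  refine (limsup_le_of_le ?_ ?_).trans_lt hc1
  · exact isCoboundedUnder_le_of_le atTop fun x => div_nonneg (hT0 _) (hT0 _)
  · filter_upwards [hc] with x hx
    exact div_le_of_le_mul₀ (hT0 x) hc0 hx

theorem EventuallyContractive.add (hF0 : ∀ x, 0 ≤ F x) (hG0 : ∀ x, 0 ≤ G x)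
    (hF : EventuallyContractive F) (hG : EventuallyContractive G) :
    EventuallyContractive fun x => F x + G x := by
  intro v hv
  obtain ⟨a, ⟨ha0, ha1⟩, ha⟩ := hF v hv
  obtain ⟨b, ⟨hb0, hb1⟩, hb⟩ := hG v hv
  refine ⟨max a b, ⟨le_max_of_le_left ha0, max_lt ha1 hb1⟩, ?_⟩
  filter_upwards [ha, hb] with x hax hbx
  calc F (v * x) + G (v * x) ≤ a * F x + b * G x := add_le_add hax hbx
    _ ≤ max a b * F x + max a b * G x := by gcongr <;> simp [hF0, hG0]
    _ = max a b * (F x + G x) := by ring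

theorem eventually_ne_zero_of_tendsto_div_one {α : Type*} {l : Filter α} {f g : α → ℝ}
    (h : Tendsto (fun x => f x / g x) l (𝓝 1)) : ∀ᶠ x in l, g x ≠ 0 :=
  (h.eventually_ne one_ne_zero).mono fun _ hx => (div_ne_zero_iff.1 hx).2

theorem EventuallyContractive.of_tendsto_div (hS0 : ∀ x, 0 ≤ S x) (hS : EventuallyContractive S)
    (h : Tendsto (fun x => T x / S x) atTop (𝓝 1)) : EventuallyContractive T := by
  intro v hv
  obtain ⟨c, ⟨hc0, hc1⟩, hc⟩ := hS v hv
  obtain ⟨ρ, hρc, hρ1⟩ : ∃ ρ : ℝ, ρ * ρ * c < 1 ∧ 1 < ρ := by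
    have hnear : ∀ᶠ ρ : ℝ in 𝓝 1, ρ * ρ * c < 1 :=
      (by fun_prop : Continuous fun ρ : ℝ => ρ * ρ * c).tendsto 1 |>.eventually
        (gt_mem_nhds (by simpa using hc1))
    exact ((hnear.filter_mono nhdsWithin_le_nhds).and
      (self_mem_nhdsWithin : ∀ᶠ ρ in 𝓝[>] (1 : ℝ), ρ ∈ Ioi 1)).exists
  have hcomparable : ∀ᶠ x in atTop, T x ≤ ρ * S x ∧ S x ≤ ρ * T x := by
    filter_upwards [eventually_ne_zero_of_tendsto_div_one h,
      h.eventually (Ioo_mem_nhds (inv_lt_one_of_one_lt₀ hρ1) hρ1)] with x hSx hx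
    have hpos : 0 < S x := (hS0 x).lt_of_ne' hSx
    obtain ⟨hlo, hhi⟩ := hx
    rw [lt_div_iff₀ hpos, inv_mul_lt_iff₀ (by linarith)] at hlo
    exact ⟨((div_lt_iff₀ hpos).1 hhi).le, hlo.le⟩
  refine ⟨ρ * ρ * c, ⟨by positivity, hρc⟩, ?_⟩
  have hvx : Tendsto (fun x : ℝ => v * x) atTop atTop :=
    tendsto_id.const_mul_atTop (zero_lt_one.trans hv)
  filter_upwards [hcomparable, hvx.eventually hcomparable, hc] with x hx hvx hcx
  calc T (v * x) ≤ ρ * S (v * x) := hvx.1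
    _ ≤ ρ * (c * (ρ * T x)) := by gcongr; exact hcx.trans (by gcongr; exact hx.2)
    _ = ρ * ρ * c * T x := by ring

theorem PosDec.of_tendsto_div_add (hF0 : ∀ x, 0 ≤ F x) (hG0 : ∀ x, 0 ≤ G x) (hT0 : ∀ x, 0 ≤ T x)
    (hFa : Antitone F) (hGa : Antitone G) (hF : PosDec F) (hG : PosDec G)
    (h : Tendsto (fun x => T x / (F x + G x)) atTop (𝓝 1)) : PosDec T := by
  have hFG := (hF.eventuallyContractive hF0 hFa).add hF0 hG0 (hG.eventuallyContractive hG0 hGa)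
  exact (hFG.of_tendsto_div (fun x => add_nonneg (hF0 x) (hG0 x)) h).posDec hT0

theorem tendsto_add_sub_mul_div_add {α : Type*} {l : Filter α} {f g : α → ℝ}
    (hf0 : ∀ x, 0 ≤ f x) (hg0 : ∀ x, 0 ≤ g x) (hf : Tendsto f l (𝓝 0))
    (hfg : ∀ᶠ x in l, f x + g x ≠ 0) :
    Tendsto (fun x => (f x + g x - f x * g x) / (f x + g x)) l (𝓝 1) := by
  have hsmall : Tendsto (fun x => f x * g x / (f x + g x)) l (𝓝 0) :=
    squeeze_zero (fun x => div_nonneg (mul_nonneg (hf0 x) (hg0 x)) (add_nonneg (hf0 x) (hg0 x)))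
      (fun x => div_le_of_le_mul₀ (add_nonneg (hf0 x) (hg0 x)) (hf0 x)
        (by nlinarith [hf0 x, hg0 x])) hf
  simpa using (tendsto_const_nhds.sub hsmall).congr' <| hfg.mono fun x hx => by field_simp

end RealFunctions

section Tails

variable {Ω : Type*} [MeasurableSpace Ω] {μ : Measure Ω} {X Y : Ω → ℝ}

theorem rtail_nonneg (x : ℝ) : 0 ≤ rtail μ X x := ENNReal.toReal_nonneg

variable [IsFiniteMeasure μ]

theorem rtail_antitone : Antitone (rtail μ X) := fun _ _ hab =>
  ENNReal.toReal_mono (measure_ne_top μ _) (measure_mono fun _ hω => hab.trans_lt hω)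

theorem tendsto_rtail_atTop (hX : Measurable X) : Tendsto (rtail μ X) atTop (𝓝 0) := by
  have hempty : ⋂ x : ℝ, X ⁻¹' Ioi x = ∅ :=
    iInter_eq_empty_iff.2 fun ω => ⟨X ω, lt_irrefl (X ω)⟩
  have hμ := tendsto_measure_iInter_atTop (μ := μ)
    (fun x => (hX measurableSet_Ioi).nullMeasurableSet)
    (fun _ _ hab => preimage_mono (Ioi_subset_Ioi hab)) ⟨0, measure_ne_top μ _⟩
  rw [hempty, measure_empty] at hμ
  exact (ENNReal.tendsto_toReal ENNReal.zero_ne_top).comp hμ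

theorem rtail_max (hY : Measurable Y) (hXY : ProbabilityTheory.IndepFun X Y μ) (x : ℝ) :
    rtail μ (fun ω => max (X ω) (Y ω)) x =
      rtail μ X x + rtail μ Y x - rtail μ X x * rtail μ Y x := by
  have hunion : {ω | x < max (X ω) (Y ω)} = X ⁻¹' Ioi x ∪ Y ⁻¹' Ioi x := by
    ext ω; simp
  have hinter : μ.real (X ⁻¹' Ioi x ∩ Y ⁻¹' Ioi x) = rtail μ X x * rtail μ Y x := by
    rw [measureReal_def, hXY.measure_inter_preimage_eq_mul _ _ measurableSet_Ioi measurableSet_Ioi,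
      ENNReal.toReal_mul]
    rfl
  have hsum := measureReal_union_add_inter (μ := μ) (s := X ⁻¹' Ioi x) (hY measurableSet_Ioi)
  rw [hinter] at hsum
  change μ.real _ = μ.real (X ⁻¹' Ioi x) + μ.real (Y ⁻¹' Ioi x) - _
  rw [hunion]
  linarith

end Tails

theorem stmt18_general {Ω : Type*} [MeasurableSpace Ω] (μ : Measure Ω) [IsProbabilityMeasure μ]
    (X Y : Ω → ℝ)
    (hmX : Measurable X) (hmY : Measurable Y)
    (hindep : ProbabilityTheory.IndepFun X Y μ)
    (hFPD : PosDec (rtail μ X))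
    (hGPD : PosDec (rtail μ Y))
    (hconv : Tendsto
      (fun x => rtail μ (fun ω => X ω + Y ω) x / (rtail μ X x + rtail μ Y x))
      atTop (nhds 1)) :
    PosDec (rtail μ (fun ω => X ω + Y ω)) ∧
    (∀ x : ℝ, rtail μ (fun ω => max (X ω) (Y ω)) x =
      rtail μ X x + rtail μ Y x - rtail μ X x * rtail μ Y x) ∧
    Tendsto
      (fun x => rtail μ (fun ω => max (X ω) (Y ω)) x / (rtail μ X x + rtail μ Y x))
      atTop (nhds 1) ∧
    PosDec (rtail μ (fun ω => max (X ω) (Y ω))) := by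
  have hmax_equiv : Tendsto
      (fun x => rtail μ (fun ω => max (X ω) (Y ω)) x / (rtail μ X x + rtail μ Y x))
      atTop (nhds 1) := by
    simpa only [rtail_max hmY hindep] using tendsto_add_sub_mul_div_add rtail_nonneg rtail_nonneg
      (tendsto_rtail_atTop hmX) (eventually_ne_zero_of_tendsto_div_one hconv)
  exact ⟨.of_tendsto_div_add rtail_nonneg rtail_nonneg rtail_nonneg rtail_antitone rtail_antitone
      hFPD hGPD hconv,
    rtail_max hmY hindep, hmax_equiv,
    .of_tendsto_div_add rtail_nonneg rtail_nonneg rtail_nonneg rtail_antitone rtail_antitone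
      hFPD hGPD hmax_equiv⟩

theorem stmt18 {Ω : Type*} [MeasurableSpace Ω] (μ : Measure Ω) [IsProbabilityMeasure μ]
    (X Y : Ω → ℝ) (hX : ∀ ω, 0 ≤ X ω) (hY : ∀ ω, 0 ≤ Y ω)
    (hmX : Measurable X) (hmY : Measurable Y)
    (hindep : ProbabilityTheory.IndepFun X Y μ)
    (hFL : LongTailed (rtail μ X)) (hFPD : PosDec (rtail μ X))
    (hGL : LongTailed (rtail μ Y)) (hGPD : PosDec (rtail μ Y))
    (hconv : Tendsto
      (fun x => rtail μ (fun ω => X ω + Y ω) x / (rtail μ X x + rtail μ Y x))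
      atTop (nhds 1)) :
    PosDec (rtail μ (fun ω => X ω + Y ω)) ∧
    (∀ x : ℝ, rtail μ (fun ω => max (X ω) (Y ω)) x =
      rtail μ X x + rtail μ Y x - rtail μ X x * rtail μ Y x) ∧
    Tendsto
      (fun x => rtail μ (fun ω => max (X ω) (Y ω)) x / (rtail μ X x + rtail μ Y x))
      atTop (nhds 1) ∧
    PosDec (rtail μ (fun ω => max (X ω) (Y ω))) :=
  stmt18_general μ X Y hmX hmY hindep hFPD hGPD hconv
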